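/- Example 2 (sharpness of Theorems 1–3 for α > 0): Let n ≥ 1, α > 0 and q > 1 + α/n. Let β = 1/(q−1), 1/(αn(q−1)) < γ ≤ 1/α², and 0 < κ ≤ (αn(γ − 1/(αn(q−1))))^{1/(q−1)}. Define u(t,x) = κ t^{−β} exp(−γ(1+|x|²)^{α/2}/t) for t > 0 and u(t,x) = 0 for t ≤ 0, and let a_{ij}(t,x) = (1+|x|²)^{(2−α)/2} δ_{ij}. Then u is C^∞ on ℝ × ℝⁿ, nonnegative, not identically zero, and satisfies the pointwise inequality u_t(t,x) ≥ Σ_{i=1}^n ∂_{x_i}(a_{ii} ∂_{x_i}u)(t,x) + |u(t,x)|^{q−1}u(t,x) for every (t,x) ∈ ℝ × ℝⁿ; i.e., u is a nontrivial nonnegative classical solution of inequality (4) in the whole space with an operator whose coefficients satisfy condition (8) with exponent α. -/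

import Mathlib

open MeasureTheory

noncomputable section

/-- The whole space `ℝ × ℝⁿ` (time × space). -/
abbrev Sp (n : ℕ) : Type := ℝ × EuclideanSpace ℝ (Fin n)

/-- Classical partial derivative in the time direction. -/
def pdt {n : ℕ} (f : Sp n → ℝ) (p : Sp n) : ℝ :=
  fderiv ℝ f p (1, 0)

/-- Classical partial derivative in the `i`-th space direction. -/
def pdx {n : ℕ} (i : Fin n) (f : Sp n → ℝ) (p : Sp n) : ℝ :=
  fderiv ℝ f p (0, EuclideanSpace.single i 1)

/-- The odd nonlinearity `s ↦ |s|^(q-1) s` (with the convention `|0|^(q-1)·0 = 0`). -/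
def nl (q s : ℝ) : ℝ := |s| ^ (q - 1) * s

/-- A test function: infinitely differentiable with compact support. -/
def IsTest {n : ℕ} (φ : Sp n → ℝ) : Prop :=
  ContDiff ℝ (⊤ : ℕ∞) φ ∧ HasCompactSupport φ

/-- `g` is the weak time-derivative of `u` on `ℝ × ℝⁿ`: `g` is locally integrable and
integration by parts against every test function holds. -/
def IsWeakDerivT {n : ℕ} (u g : Sp n → ℝ) : Prop :=
  LocallyIntegrable g volume ∧
  ∀ φ : Sp n → ℝ, IsTest φ → ∫ p, u p * pdt φ p = -∫ p, g p * φ p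

/-- `g` is the weak `x_i`-derivative of `u` on `ℝ × ℝⁿ`. -/
def IsWeakDerivX {n : ℕ} (i : Fin n) (u g : Sp n → ℝ) : Prop :=
  LocallyIntegrable g volume ∧
  ∀ φ : Sp n → ℝ, IsTest φ → ∫ p, u p * pdx i φ p = -∫ p, g p * φ p

/-- Standing assumptions on the coefficients `a_{ij}` and the dominating function `A`:
measurability, local boundedness, symmetry, and `0 ≤ Σ a_{ij} ξ_i ξ_j ≤ A |ξ|²` a.e. -/
structure Coeffs (n : ℕ) (a : Fin n → Fin n → Sp n → ℝ) (A : Sp n → ℝ) : Prop where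
  meas : ∀ i j, Measurable (a i j)
  locBdd : ∀ i j, ∀ K : Set (Sp n), IsCompact K → ∃ C : ℝ, ∀ p ∈ K, |a i j p| ≤ C
  symm : ∀ᵐ p : Sp n, ∀ i j, a i j p = a j i p
  measA : Measurable A
  nonnegA : ∀ p, 0 ≤ A p
  locBddA : ∀ K : Set (Sp n), IsCompact K → ∃ C : ℝ, ∀ p ∈ K, A p ≤ C
  quad : ∀ᵐ p : Sp n, ∀ ξ : Fin n → ℝ,
    0 ≤ ∑ i : Fin n, ∑ j : Fin n, a i j p * ξ i * ξ j ∧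
    ∑ i : Fin n, ∑ j : Fin n, a i j p * ξ i * ξ j ≤ A p * ∑ i : Fin n, ξ i ^ 2

/-- Condition (8): the essential supremum of `A` over the slab `{R/2 < |x| < R}`
is at most `c·R^(2-α)`, for every `R > 1`. -/
def Cond8 {n : ℕ} (A : Sp n → ℝ) (α c : ℝ) : Prop :=
  ∀ R : ℝ, 1 < R →
    ∀ᵐ p : Sp n, (R / 2 < ‖p.2‖ ∧ ‖p.2‖ < R) → A p ≤ c * R ^ (2 - α)

/-- `(u, v)` is a weak solution of
`u_t − Σ ∂_{x_i}(a_{ij} ∂_{x_j}u) − |u|^{q−1}u ≥ v_t − Σ ∂_{x_i}(a_{ij} ∂_{x_j}v) − |v|^{q−1}v`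
in the whole space `ℝ × ℝⁿ`. -/
def WeakSolPair {n : ℕ} (q : ℝ) (a : Fin n → Fin n → Sp n → ℝ) (u v : Sp n → ℝ) : Prop :=
  Measurable u ∧ Measurable v ∧
  LocallyIntegrable u volume ∧ LocallyIntegrable v volume ∧
  LocallyIntegrable (fun p => |u p| ^ q) volume ∧
  LocallyIntegrable (fun p => |v p| ^ q) volume ∧
  ∃ ut vt : Sp n → ℝ, ∃ ux vx : Fin n → Sp n → ℝ,
    IsWeakDerivT u ut ∧ IsWeakDerivT v vt ∧
    (∀ j, IsWeakDerivX j u (ux j)) ∧ (∀ j, IsWeakDerivX j v (vx j)) ∧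
    ∀ φ : Sp n → ℝ, IsTest φ → (∀ p, 0 ≤ φ p) →
      ∫ p, (vt p * φ p + ∑ i : Fin n, ∑ j : Fin n, a i j p * pdx i φ p * vx j p
              - nl q (v p) * φ p) ≤
      ∫ p, (ut p * φ p + ∑ i : Fin n, ∑ j : Fin n, a i j p * pdx i φ p * ux j p
              - nl q (u p) * φ p)

/-- The Example 2 profile: `u(t,x) = κ t^{−β} exp(−γ(1+|x|²)^{α/2}/t)` for `t > 0`,
extended by `0` for `t ≤ 0`. -/
def profileU (n : ℕ) (α β γ κ : ℝ) (p : Sp n) : ℝ :=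
  if 0 < p.1 then κ * p.1 ^ (-β) * Real.exp (-γ * (1 + ‖p.2‖ ^ 2) ^ (α / 2) / p.1) else 0

/-- The diagonal coefficient `a_{ii}(t,x) = (1+|x|²)^{(2−α)/2}`. -/
def coefDiag (n : ℕ) (α : ℝ) (p : Sp n) : ℝ :=
  (1 + ‖p.2‖ ^ 2) ^ ((2 - α) / 2)

/-!
For `t > 0` the coefficient cancels the factor `(1 + |x|²)^(α/2 - 1)` of `∂ᵢu`, so the flux is
`a ∂ᵢu = -(γα/t) xᵢ u` and `Σᵢ ∂ᵢ(a ∂ᵢu) = -(γα/t) (n - (γα/t) (1 + |x|²)^(α/2 - 1) |x|²) u`,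
while `u_t = (γ (1 + |x|²)^(α/2) / t² - β/t) u`. Since `γα² ≤ 1`, the second-order term is
absorbed by `u_t`; since `β (q - 1) = 1`, `u^(q-1) ≤ κ^(q-1)/t ≤ (γαn - β)/t`, so the
nonlinearity is absorbed by the first-order terms `(γαn - β) u / t`. Rescaling time by `γ (1 + |x|²)^(α/2)` reduces smoothness across `t = 0` to that of
`x ↦ x^(-β) e^(-1/x)` glued to `0` on `x ≤ 0`, whose derivatives are again of the form
`P(1/x) x^(-β) e^(-1/x)`; a `C¹` function vanishing on `t ≤ 0` has vanishing derivative there.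
-/

open Polynomial Real Filter Set Topology

def rpowExpNegInvGlue (b x : ℝ) : ℝ :=
  if x ≤ 0 then 0 else x ^ (-b) * exp (-x⁻¹)

namespace rpowExpNegInvGlue

theorem zero_of_nonpos (b : ℝ) {x : ℝ} (hx : x ≤ 0) : rpowExpNegInvGlue b x = 0 := if_pos hx

theorem of_pos (b : ℝ) {x : ℝ} (hx : 0 < x) : rpowExpNegInvGlue b x = x ^ (-b) * exp (-x⁻¹) :=
  if_neg hx.not_ge

theorem _root_.Polynomial.tendsto_eval_mul_rpow_mul_exp_neg_atTop (p : ℝ[X]) (b : ℝ) :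
    Tendsto (fun y ↦ p.eval y * y ^ b * exp (-y)) atTop (𝓝 0) := by
  have hp : Tendsto (fun y ↦ (p.comp (C 2 * X)).eval (y / 2) / exp (y / 2)) atTop (𝓝 0) :=
    (p.comp (C 2 * X)).tendsto_div_exp_atTop.comp (tendsto_id.atTop_div_const two_pos)
  have hb := tendsto_rpow_mul_exp_neg_mul_atTop_nhds_zero b (1 / 2) one_half_pos
  -- one half of `e^(-y)` beats the polynomial, the other half the power `y^b`
  refine (mul_zero (0 : ℝ) ▸ hp.mul hb).congr fun y ↦ ?_
  have : exp (-y) = (exp (y / 2))⁻¹ * exp (-(1 / 2) * y) := by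
    rw [← exp_neg, ← exp_add]; ring_nf
  simp only [eval_comp, eval_mul, eval_C, eval_X, this]
  ring_nf

theorem tendsto_polynomial_inv_mul_zero (p : ℝ[X]) (b : ℝ) :
    Tendsto (fun x ↦ p.eval x⁻¹ * rpowExpNegInvGlue b x) (𝓝 0) (𝓝 0) := by
  simp only [rpowExpNegInvGlue, mul_ite, mul_zero]
  refine tendsto_const_nhds.if ?_
  simp only [not_le]
  refine ((p.tendsto_eval_mul_rpow_mul_exp_neg_atTop b).comp
    tendsto_inv_nhdsGT_zero).congr' ?_
  filter_upwards [self_mem_nhdsWithin] with x (hx : 0 < x)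
  simp [rpow_neg hx.le, inv_rpow hx.le, mul_assoc]

theorem hasDerivAt_polynomial_eval_inv_mul (p : ℝ[X]) (b x : ℝ) :
    HasDerivAt (fun x ↦ p.eval x⁻¹ * rpowExpNegInvGlue b x)
      ((X ^ 2 * (p - derivative p) - C b * (X * p)).eval x⁻¹ * rpowExpNegInvGlue b x) x := by
  rcases lt_trichotomy x 0 with hx | rfl | hx
  · rw [zero_of_nonpos b hx.le, mul_zero]
    refine (hasDerivAt_const _ 0).congr_of_eventuallyEq ?_
    filter_upwards [gt_mem_nhds hx] with y hy
    rw [zero_of_nonpos b hy.le, mul_zero]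
  · rw [zero_of_nonpos b le_rfl, mul_zero, hasDerivAt_iff_tendsto_slope]
    refine ((tendsto_polynomial_inv_mul_zero (X * p) b).mono_left inf_le_left).congr fun x ↦ ?_
    simp [slope_def_field, div_eq_mul_inv, zero_of_nonpos b le_rfl]
    ring
  · have hinv := hasDerivAt_inv hx.ne'
    have h := ((p.hasDerivAt x⁻¹).comp x hinv).mul
      (((hasDerivAt_id x).rpow_const (p := -b) (Or.inl hx.ne')).mul hinv.neg.exp)
    refine (h.congr_of_eventuallyEq ?_).congr_deriv ?_
    · filter_upwards [lt_mem_nhds hx] with y hy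
      simp [of_pos b hy]
    · have : x ^ (-b - 1) = x ^ (-b) * x⁻¹ := by
        rw [rpow_sub_one hx.ne', div_eq_mul_inv]
      simp [of_pos b hx, this]
      ring

theorem contDiff_polynomial_eval_inv_mul {n : ℕ∞} (p : ℝ[X]) (b : ℝ) :
    ContDiff ℝ n (fun x ↦ p.eval x⁻¹ * rpowExpNegInvGlue b x) := by
  apply contDiff_all_iff_nat.2 (fun m ↦ ?_) n
  induction m generalizing p with
  | zero => exact contDiff_zero.2 <| continuous_iff_continuousAt.2 fun x ↦
      (hasDerivAt_polynomial_eval_inv_mul p b x).continuousAt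
  | succ m ihm =>
    rw [show ((m + 1 : ℕ) : WithTop ℕ∞) = m + 1 from rfl]
    refine contDiff_succ_iff_deriv.2
      ⟨fun x ↦ (hasDerivAt_polynomial_eval_inv_mul p b x).differentiableAt, by simp, ?_⟩
    rw [funext fun x ↦ (hasDerivAt_polynomial_eval_inv_mul p b x).deriv]
    exact ihm _

protected theorem contDiff {n : ℕ∞} (b : ℝ) : ContDiff ℝ n (rpowExpNegInvGlue b) := by
  simpa using contDiff_polynomial_eval_inv_mul (n := n) 1 b

end rpowExpNegInvGlue

theorem fderiv_eq_zero_of_eq_zero_of_fst_nonpos {E F : Type*} [NormedAddCommGroup E]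
    [NormedSpace ℝ E] [NormedAddCommGroup F] [NormedSpace ℝ F] {f : ℝ × E → F}
    (hf : ContDiff ℝ 1 f) (h0 : ∀ q : ℝ × E, q.1 ≤ 0 → f q = 0) {p : ℝ × E} (hp : p.1 ≤ 0) :
    fderiv ℝ f p = 0 := by
  have hneg : EqOn (fderiv ℝ f) 0 (Prod.fst ⁻¹' Iio 0) := fun q (hq : q.1 < 0) ↦ by
    have : f =ᶠ[𝓝 q] fun _ ↦ 0 := by
      filter_upwards [(isOpen_lt continuous_fst continuous_const).mem_nhds hq] with r hr
      exact h0 r hr.le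
    simp [this.fderiv_eq]
  have hcl : p ∈ closure (Prod.fst ⁻¹' Iio (0 : ℝ)) := by
    rwa [← isOpenMap_fst.preimage_closure_eq_closure_preimage continuous_fst, closure_Iio]
  exact hneg.closure (hf.continuous_fderiv one_ne_zero) continuous_const hcl

section PartialDerivatives

variable {n : ℕ} {f : Sp n → ℝ} {p : Sp n} {d : ℝ}

theorem pdt_eq_of_hasDerivAt (hf : DifferentiableAt ℝ f p)
    (h : HasDerivAt (fun s ↦ f (s, p.2)) d p.1) : pdt f p = d :=
  (hf.hasFDerivAt.comp_hasDerivAt p.1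
    ((hasDerivAt_id p.1).prodMk (hasDerivAt_const p.1 p.2))).unique h

theorem pdx_eq_of_hasDerivAt {i : Fin n} (hf : DifferentiableAt ℝ f p)
    (h : HasDerivAt (fun s : ℝ ↦ f (p.1, p.2 + s • EuclideanSpace.single i 1)) d 0) :
    pdx i f p = d := by
  have hline : HasDerivAt (fun s : ℝ ↦ (p.1, p.2 + s • EuclideanSpace.single i (1 : ℝ)))
      ((0 : ℝ), EuclideanSpace.single i (1 : ℝ)) 0 := by
    simpa using (hasDerivAt_const (0 : ℝ) p.1).prodMk
      (((hasDerivAt_id (0 : ℝ)).smul_const _).const_add p.2)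
  exact (hf.hasFDerivAt.comp_hasDerivAt_of_eq 0 hline (by simp)).unique h

theorem ContDiff.pdx (hf : ContDiff ℝ (⊤ : ℕ∞) f) (i : Fin n) :
    ContDiff ℝ (⊤ : ℕ∞) (pdx i f) :=
  (hf.fderiv_right (m := (⊤ : ℕ∞)) (by simp)).clm_apply contDiff_const

end PartialDerivatives

section Profile

variable {n : ℕ} {α β γ κ : ℝ}

theorem profileU_of_pos {p : Sp n} (hp : 0 < p.1) :
    profileU n α β γ κ p = κ * p.1 ^ (-β) * exp (-γ * (1 + ‖p.2‖ ^ 2) ^ (α / 2) / p.1) :=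
  if_pos hp

theorem profileU_of_nonpos {p : Sp n} (hp : p.1 ≤ 0) : profileU n α β γ κ p = 0 :=
  if_neg hp.not_gt

theorem profileU_nonneg (hκ : 0 ≤ κ) (p : Sp n) : 0 ≤ profileU n α β γ κ p := by
  unfold profileU
  split_ifs <;> positivity

theorem profileU_pos (hκ : 0 < κ) {p : Sp n} (hp : 0 < p.1) : 0 < profileU n α β γ κ p := by
  rw [profileU_of_pos hp]
  positivity

theorem profileU_ne_zero (hκ : 0 < κ) : profileU n α β γ κ ≠ 0 := fun h ↦
  (profileU_pos hκ (p := (1, 0)) one_pos).ne' (congrFun h _)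

theorem contDiff_one_add_norm_sq : ContDiff ℝ (⊤ : ℕ∞) fun p : Sp n ↦ 1 + ‖p.2‖ ^ 2 :=
  contDiff_const.add (contDiff_norm_sq ℝ |>.comp contDiff_snd)

theorem contDiff_coefDiag : ContDiff ℝ (⊤ : ℕ∞) (coefDiag n α) :=
  contDiff_one_add_norm_sq.rpow_const_of_ne fun _ ↦ by positivity

theorem profileU_eq_rpowExpNegInvGlue (hγ : 0 < γ) (p : Sp n) :
    profileU n α β γ κ p = κ * (γ * (1 + ‖p.2‖ ^ 2) ^ (α / 2)) ^ (-β) *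
      rpowExpNegInvGlue β (p.1 / (γ * (1 + ‖p.2‖ ^ 2) ^ (α / 2))) := by
  have hc : 0 < γ * (1 + ‖p.2‖ ^ 2) ^ (α / 2) := by positivity
  rcases lt_or_ge 0 p.1 with hp | hp
  · rw [profileU_of_pos hp, rpowExpNegInvGlue.of_pos β (div_pos hp hc),
      div_rpow hp.le hc.le, inv_div]
    field_simp
  · rw [profileU_of_nonpos hp,
      rpowExpNegInvGlue.zero_of_nonpos β (div_nonpos_of_nonpos_of_nonneg hp hc.le), mul_zero]

theorem contDiff_profileU (hγ : 0 < γ) : ContDiff ℝ (⊤ : ℕ∞) (profileU n α β γ κ) := by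
  have hc : ∀ p : Sp n, γ * (1 + ‖p.2‖ ^ 2) ^ (α / 2) ≠ 0 := fun _ ↦ by positivity
  have hw : ContDiff ℝ (⊤ : ℕ∞) fun p : Sp n ↦ γ * (1 + ‖p.2‖ ^ 2) ^ (α / 2) :=
    contDiff_const.mul (contDiff_one_add_norm_sq.rpow_const_of_ne fun _ ↦ by positivity)
  rw [funext (profileU_eq_rpowExpNegInvGlue hγ)]
  exact (contDiff_const.mul (hw.rpow_const_of_ne hc)).mul
    ((rpowExpNegInvGlue.contDiff β).comp (contDiff_fst.div hw hc))

theorem hasDerivAt_profileU_fst {t : ℝ} (ht : 0 < t) (x : EuclideanSpace ℝ (Fin n)) :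
    HasDerivAt (fun s ↦ profileU n α β γ κ (s, x))
      (profileU n α β γ κ (t, x) * (γ * (1 + ‖x‖ ^ 2) ^ (α / 2) / t ^ 2 - β / t)) t := by
  have h := (((hasDerivAt_id t).rpow_const (p := -β) (Or.inl ht.ne')).const_mul κ).mul
    ((hasDerivAt_const t (-γ * (1 + ‖x‖ ^ 2) ^ (α / 2))).div (hasDerivAt_id t) ht.ne').exp
  refine (h.congr_of_eventuallyEq ?_).congr_deriv ?_
  · filter_upwards [lt_mem_nhds ht] with s hs
    exact profileU_of_pos (p := (s, x)) hs
  · simp only [profileU_of_pos (p := (t, x)) ht, id, Pi.div_apply, rpow_sub_one ht.ne']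
    field_simp
    ring

theorem hasDerivAt_profileU_snd {t : ℝ} (ht : 0 < t) (x : EuclideanSpace ℝ (Fin n))
    (i : Fin n) :
    HasDerivAt (fun s : ℝ ↦ profileU n α β γ κ (t, x + s • EuclideanSpace.single i 1))
      (-(γ * α / t) * (1 + ‖x‖ ^ 2) ^ (α / 2 - 1) * x i * profileU n α β γ κ (t, x)) 0 := by
  have hρ : HasDerivAt (fun s : ℝ ↦ 1 + ‖x + s • EuclideanSpace.single i (1 : ℝ)‖ ^ 2)
      (2 * x i) 0 := by
    simpa [EuclideanSpace.inner_single_right] using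
      (((hasDerivAt_id (0 : ℝ)).smul_const (EuclideanSpace.single i (1 : ℝ))).const_add
        x).norm_sq.const_add 1
  have h := ((((hρ.rpow_const (p := α / 2) (Or.inl (by positivity))).const_mul (-γ)).div_const
    t).exp.const_mul (κ * t ^ (-β)))
  rw [funext fun s ↦ profileU_of_pos (p := (t, x + s • EuclideanSpace.single i 1)) ht,
    profileU_of_pos (p := (t, x)) ht]
  refine h.congr_deriv ?_
  simp only [zero_smul, add_zero]
  ring

theorem pdt_profileU (hγ : 0 < γ) {p : Sp n} (hp : 0 < p.1) :
    pdt (profileU n α β γ κ) p =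
      profileU n α β γ κ p * (γ * (1 + ‖p.2‖ ^ 2) ^ (α / 2) / p.1 ^ 2 - β / p.1) :=
  pdt_eq_of_hasDerivAt ((contDiff_profileU hγ).differentiable (by simp) p)
    (hasDerivAt_profileU_fst hp p.2)

theorem pdx_profileU (hγ : 0 < γ) {p : Sp n} (hp : 0 < p.1) (i : Fin n) :
    pdx i (profileU n α β γ κ) p =
      -(γ * α / p.1) * (1 + ‖p.2‖ ^ 2) ^ (α / 2 - 1) * p.2 i * profileU n α β γ κ p :=
  pdx_eq_of_hasDerivAt ((contDiff_profileU hγ).differentiable (by simp) p)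
    (hasDerivAt_profileU_snd hp p.2 i)

theorem coefDiag_mul_pdx_profileU (hγ : 0 < γ) {p : Sp n} (hp : 0 < p.1) (i : Fin n) :
    coefDiag n α p * pdx i (profileU n α β γ κ) p =
      -(γ * α / p.1) * p.2 i * profileU n α β γ κ p := by
  have hcancel : coefDiag n α p * (1 + ‖p.2‖ ^ 2) ^ (α / 2 - 1) = 1 := by
    rw [coefDiag, ← rpow_add (by positivity), show (2 - α) / 2 + (α / 2 - 1) = 0 by ring,
      rpow_zero]
  rw [pdx_profileU hγ hp]
  linear_combination (-(γ * α / p.1) * p.2 i * profileU n α β γ κ p) * hcancel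

theorem pdx_coefDiag_mul_pdx_profileU (hγ : 0 < γ) {p : Sp n} (hp : 0 < p.1) (i : Fin n) :
    pdx i (fun p' ↦ coefDiag n α p' * pdx i (profileU n α β γ κ) p') p =
      -(γ * α / p.1) * (profileU n α β γ κ p -
        (γ * α / p.1) * (1 + ‖p.2‖ ^ 2) ^ (α / 2 - 1) * p.2 i ^ 2 * profileU n α β γ κ p) := by
  have hflux := (contDiff_coefDiag (α := α)).mul
    ((contDiff_profileU (α := α) (β := β) (κ := κ) hγ).pdx i)
  refine pdx_eq_of_hasDerivAt (hflux.differentiable (by simp) p) ?_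
  have h := (((hasDerivAt_id (0 : ℝ)).const_add (p.2 i)).const_mul (-(γ * α / p.1))).mul
    (hasDerivAt_profileU_snd (α := α) (β := β) (γ := γ) (κ := κ) hp p.2 i)
  have hline : (fun s : ℝ ↦ coefDiag n α (p.1, p.2 + s • EuclideanSpace.single i 1) *
      pdx i (profileU n α β γ κ) (p.1, p.2 + s • EuclideanSpace.single i 1)) =
      fun s ↦ -(γ * α / p.1) * (p.2 i + s) *
        profileU n α β γ κ (p.1, p.2 + s • EuclideanSpace.single i 1) := funext fun s ↦ by
    rw [coefDiag_mul_pdx_profileU hγ (p := (p.1, p.2 + s • EuclideanSpace.single i 1)) hp i]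
    simp
  rw [hline]
  refine h.congr_deriv ?_
  simp only [zero_smul, add_zero, id, mul_one]
  ring

end Profile

section Supersolution

variable {n : ℕ} {α β γ κ q : ℝ}

theorem profileU_rpow_sub_one_le (hγ : 0 ≤ γ) (hκ : 0 ≤ κ) (hq : 1 ≤ q)
    (hβ : β * (q - 1) = 1) {p : Sp n} (hp : 0 < p.1) :
    profileU n α β γ κ p ^ (q - 1) ≤ κ ^ (q - 1) / p.1 := by
  have hexp : -γ * (1 + ‖p.2‖ ^ 2) ^ (α / 2) / p.1 * (q - 1) ≤ 0 :=
    mul_nonpos_of_nonpos_of_nonneg (div_nonpos_of_nonpos_of_nonneg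
      (by rw [neg_mul]; exact neg_nonpos.2 (by positivity)) hp.le) (by linarith)
  rw [profileU_of_pos hp, mul_rpow (by positivity) (exp_pos _).le, mul_rpow hκ (by positivity),
    ← rpow_mul hp.le, ← exp_mul, show -β * (q - 1) = -1 by linarith, rpow_neg_one,
    div_eq_mul_inv]
  exact mul_le_of_le_one_right (by positivity) (exp_le_one_iff.2 hexp)

theorem sum_pdx_coefDiag_mul_pdx_profileU (hγ : 0 < γ) {p : Sp n} (hp : 0 < p.1) :
    ∑ i : Fin n, pdx i (fun p' ↦ coefDiag n α p' * pdx i (profileU n α β γ κ) p') p =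
      -(γ * α / p.1) * (n * profileU n α β γ κ p -
        (γ * α / p.1) * (1 + ‖p.2‖ ^ 2) ^ (α / 2 - 1) * ‖p.2‖ ^ 2 * profileU n α β γ κ p) := by
  simp only [pdx_coefDiag_mul_pdx_profileU hγ hp, EuclideanSpace.real_norm_sq_eq,
    ← Finset.mul_sum, Finset.sum_sub_distrib, Finset.sum_const, Finset.card_univ,
    Fintype.card_fin, nsmul_eq_mul, ← Finset.sum_mul]

theorem profileU_supersolution_of_pos (hγ : 0 < γ) (hγα : γ * α ^ 2 ≤ 1) (hκ : 0 ≤ κ)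
    (hq : 1 ≤ q) (hβ : β * (q - 1) = 1) (hκq : κ ^ (q - 1) ≤ γ * α * n - β) {p : Sp n}
    (hp : 0 < p.1) :
    (∑ i : Fin n, pdx i (fun p' ↦ coefDiag n α p' * pdx i (profileU n α β γ κ) p') p) +
      nl q (profileU n α β γ κ p) ≤ pdt (profileU n α β γ κ) p := by
  set u := profileU n α β γ κ p
  set ρ := 1 + ‖p.2‖ ^ 2
  have hu : 0 ≤ u := profileU_nonneg hκ p
  have hρ : 0 < ρ := by positivity
  have hdiffusion : (γ * α) ^ 2 * (ρ ^ (α / 2 - 1) * ‖p.2‖ ^ 2) ≤ γ * ρ ^ (α / 2) :=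
    calc (γ * α) ^ 2 * (ρ ^ (α / 2 - 1) * ‖p.2‖ ^ 2) ≤ γ * (ρ ^ (α / 2 - 1) * ρ) :=
          mul_le_mul (by nlinarith) (mul_le_mul_of_nonneg_left (by linarith) (by positivity))
            (by positivity) hγ.le
      _ = γ * ρ ^ (α / 2) := by rw [← rpow_add_one hρ.ne', sub_add_cancel]
  have hreaction : u ^ (q - 1) ≤ (γ * α * n - β) / p.1 :=
    (profileU_rpow_sub_one_le hγ.le hκ hq hβ hp).trans (div_le_div_of_nonneg_right hκq hp.le)
  have key : (γ * α / p.1) ^ 2 * (ρ ^ (α / 2 - 1) * ‖p.2‖ ^ 2) + u ^ (q - 1) ≤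
      γ * ρ ^ (α / 2) / p.1 ^ 2 - β / p.1 + (γ * α / p.1) * n := by
    have : (γ * α / p.1) ^ 2 * (ρ ^ (α / 2 - 1) * ‖p.2‖ ^ 2) ≤ γ * ρ ^ (α / 2) / p.1 ^ 2 := by
      rw [div_pow, div_mul_eq_mul_div]
      exact div_le_div_of_nonneg_right hdiffusion (by positivity)
    have : (γ * α * n - β) / p.1 = (γ * α / p.1) * n - β / p.1 := by ring
    linarith
  rw [sum_pdx_coefDiag_mul_pdx_profileU hγ hp, nl, abs_of_nonneg hu, pdt_profileU hγ hp]
  nlinarith [mul_le_mul_of_nonneg_left key hu]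

theorem profileU_supersolution_of_nonpos (hγ : 0 < γ) {p : Sp n} (hp : p.1 ≤ 0) :
    (∑ i : Fin n, pdx i (fun p' ↦ coefDiag n α p' * pdx i (profileU n α β γ κ) p') p) +
      nl q (profileU n α β γ κ p) ≤ pdt (profileU n α β γ κ) p := by
  have hsmooth := contDiff_profileU (n := n) (α := α) (β := β) (κ := κ) hγ
  have hfderiv : ∀ p' : Sp n, p'.1 ≤ 0 → fderiv ℝ (profileU n α β γ κ) p' = 0 := fun _ ↦
    fderiv_eq_zero_of_eq_zero_of_fst_nonpos (hsmooth.of_le (by simp)) fun _ ↦ profileU_of_nonpos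
  have hflux : ∀ i : Fin n,
      pdx i (fun p' ↦ coefDiag n α p' * pdx i (profileU n α β γ κ) p') p = 0 := fun i ↦ by
    rw [pdx, fderiv_eq_zero_of_eq_zero_of_fst_nonpos
      ((contDiff_coefDiag.mul (hsmooth.pdx i)).of_le (by simp))
      (fun p' hp' ↦ by simp [pdx, hfderiv p' hp']) hp]
    rfl
  simp [hflux, nl, profileU_of_nonpos hp, pdt, hfderiv p hp]

theorem profileU_supersolution (hγ : 0 < γ) (hγα : γ * α ^ 2 ≤ 1) (hκ : 0 ≤ κ)
    (hq : 1 ≤ q) (hβ : β * (q - 1) = 1) (hκq : κ ^ (q - 1) ≤ γ * α * n - β) (p : Sp n) :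
    (∑ i : Fin n, pdx i (fun p' ↦ coefDiag n α p' * pdx i (profileU n α β γ κ) p') p) +
      nl q (profileU n α β γ κ p) ≤ pdt (profileU n α β γ κ) p :=
  (lt_or_ge 0 p.1).elim (profileU_supersolution_of_pos hγ hγα hκ hq hβ hκq)
    (profileU_supersolution_of_nonpos hγ)

end Supersolution

theorem rpow_le_rpow_abs_of_inv_le_of_le {a s : ℝ} (e : ℝ) (ha : 0 < a) (has : a⁻¹ ≤ s)
    (hsa : s ≤ a) : s ^ e ≤ a ^ |e| := by
  have hs : 0 < s := (inv_pos.2 ha).trans_le has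
  rcases le_total 0 e with he | he
  · rw [abs_of_nonneg he]
    exact rpow_le_rpow hs.le hsa he
  · rw [abs_of_nonpos he, rpow_neg ha.le, ← inv_rpow ha.le]
    exact rpow_le_rpow_of_nonpos (inv_pos.2 ha) has he

theorem cond8_coefDiag (n : ℕ) (α : ℝ) :
    Cond8 (fun p : Sp n ↦ coefDiag n α p) α (4 ^ |(2 - α) / 2|) := by
  intro R hR
  refine Eventually.of_forall fun p ⟨hlow, hhigh⟩ ↦ ?_
  have hR0 : 0 < R := one_pos.trans hR
  have hx := norm_nonneg p.2
  have hρ : 0 < 1 + ‖p.2‖ ^ 2 := by positivity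
  calc coefDiag n α p = ((1 + ‖p.2‖ ^ 2) / R ^ 2) ^ ((2 - α) / 2) * R ^ (2 - α) := by
        rw [coefDiag, div_rpow hρ.le (by positivity), ← rpow_natCast_mul hR0.le,
          show ((2 : ℕ) : ℝ) * ((2 - α) / 2) = 2 - α by push_cast; ring,
          div_mul_cancel₀ _ (rpow_pos_of_pos hR0 _).ne']
    _ ≤ 4 ^ |(2 - α) / 2| * R ^ (2 - α) := by
        refine mul_le_mul_of_nonneg_right (rpow_le_rpow_abs_of_inv_le_of_le _ four_pos ?_ ?_)
          (by positivity)
        · rw [le_div_iff₀ (by positivity)]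
          nlinarith
        · rw [div_le_iff₀ (by positivity)]
          nlinarith

/-- **Example 2** (sharpness of Theorems 1–3 for `α > 0`): for `q > 1 + α/n` the profile
`u` is a nontrivial nonnegative `C^∞` classical solution of `u_t ≥ Σᵢ ∂_{x_i}(a_{ii} ∂_{x_i}u)
+ |u|^{q−1}u` in the whole space, with coefficients satisfying condition (8). -/
theorem example2_sharpness (n : ℕ) (hn : 1 ≤ n) (α q β γ κ : ℝ)
    (hα : 0 < α) (hq : 1 + α / n < q)
    (hβ : β = 1 / (q - 1))
    (hγl : 1 / (α * n * (q - 1)) < γ) (hγu : γ ≤ 1 / α ^ 2)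
    (hκl : 0 < κ) (hκu : κ ≤ (α * n * (γ - 1 / (α * n * (q - 1)))) ^ (1 / (q - 1))) :
    ContDiff ℝ (⊤ : ℕ∞) (profileU n α β γ κ) ∧
    (∀ p, 0 ≤ profileU n α β γ κ p) ∧
    profileU n α β γ κ ≠ 0 ∧
    (∀ p : Sp n,
      (∑ i : Fin n, pdx i (fun p' => coefDiag n α p' * pdx i (profileU n α β γ κ) p') p) +
        nl q (profileU n α β γ κ p) ≤ pdt (profileU n α β γ κ) p) ∧
    (∃ c : ℝ, 0 < c ∧ Cond8 (fun p : Sp n => coefDiag n α p) α c) := by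
  have hn0 : (0 : ℝ) < n := by exact_mod_cast hn
  have hq1 : 1 < q := by linarith [div_pos hα hn0]
  have hγ : 0 < γ := lt_of_le_of_lt (by positivity) hγl
  have hγα : γ * α ^ 2 ≤ 1 := (le_div_iff₀ (by positivity)).1 hγu
  have hβq : β * (q - 1) = 1 := by rw [hβ, one_div_mul_cancel (by linarith)]
  have hκq : κ ^ (q - 1) ≤ γ * α * n - β := by
    have hM : 0 ≤ α * n * (γ - 1 / (α * n * (q - 1))) := by
      have := sub_pos.2 hγl
      positivity
    calc κ ^ (q - 1) ≤ α * n * (γ - 1 / (α * n * (q - 1))) :=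
          (le_rpow_inv_iff_of_pos hκl.le hM (by linarith)).1 (one_div (q - 1) ▸ hκu)
      _ = γ * α * n - β := by
          rw [hβ]
          field_simp
  exact ⟨contDiff_profileU hγ, profileU_nonneg hκl.le, profileU_ne_zero hκl,
    profileU_supersolution hγ hγα hκl.le hq1.le hβq hκq, _, by positivity, cond8_coefDiag n α⟩
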